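/- arXiv:2009.06626 — 2 statements merged into one kernel-verified Lean document; each statement's English description precedes it below -/
import Mathlib

section
/- The extreme points of the set {μ : μ probability measure on [a,b], E_μ[id] = m} are measures supported on at most 2 points. -/
open MeasureTheory Metric
open scoped ENNReal

private lemma ouq_half_smul (c d : ℝ) (hc : 0 ≤ c) (hd : 0 ≤ d) (hcd : c + d = 2)
    (ρ : Measure ℝ) :
    ENNReal.ofReal (1/2) • (ENNReal.ofReal c • ρ)
      + ENNReal.ofReal (1/2) • (ENNReal.ofReal d • ρ) = ρ := by
  rw [smul_smul, smul_smul, ← add_smul, ← ENNReal.ofReal_mul (by norm_num),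
    ← ENNReal.ofReal_mul (by norm_num),
    ← ENNReal.ofReal_add (by positivity) (by positivity)]
  have h : 1/2 * c + 1/2 * d = 1 := by linarith
  rw [h, ENNReal.ofReal_one, one_smul]

private lemma ouq_decomp (μ : Measure ℝ) (A B C : Set ℝ)
    (hA : MeasurableSet A) (hB : MeasurableSet B) (hC : MeasurableSet C)
    (hAB : Disjoint A B) (hAC : Disjoint A C) (hBC : Disjoint B C) :
    μ.restrict A + μ.restrict B + μ.restrict C + μ.restrict (A ∪ B ∪ C)ᶜ = μ := by
  have h1 : μ.restrict (A ∪ B ∪ C) = μ.restrict A + μ.restrict B + μ.restrict C := by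
    rw [Measure.restrict_union (by simp [Set.disjoint_union_left, hAC, hBC]) hC,
      Measure.restrict_union hAB hB]
  rw [← h1, Measure.restrict_add_restrict_compl ((hA.union hB).union hC)]

private lemma ouq_pert_mem (a b : ℝ) (μ : Measure ℝ) [IsProbabilityMeasure μ]
    (hsupp : μ (Set.Icc a b)ᶜ = 0)
    (A B C : Set ℝ) (hA : MeasurableSet A) (hB : MeasurableSet B) (hC : MeasurableSet C)
    (hAB : Disjoint A B) (hAC : Disjoint A C) (hBC : Disjoint B C)
    (hInt : Integrable (fun u : ℝ => u) μ)
    (d₁ d₂ d₃ : ℝ) (h₁ : |d₁| ≤ 1/2) (h₂ : |d₂| ≤ 1/2) (h₃ : |d₃| ≤ 1/2)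
    (hp : d₁ * (μ A).toReal + d₂ * (μ B).toReal + d₃ * (μ C).toReal = 0)
    (hq : d₁ * (∫ u in A, u ∂μ) + d₂ * (∫ u in B, u ∂μ) + d₃ * (∫ u in C, u ∂μ) = 0) :
    IsProbabilityMeasure (ENNReal.ofReal (1 + d₁) • μ.restrict A
        + ENNReal.ofReal (1 + d₂) • μ.restrict B + ENNReal.ofReal (1 + d₃) • μ.restrict C
        + ENNReal.ofReal 1 • μ.restrict (A ∪ B ∪ C)ᶜ)
      ∧ (ENNReal.ofReal (1 + d₁) • μ.restrict A
        + ENNReal.ofReal (1 + d₂) • μ.restrict B + ENNReal.ofReal (1 + d₃) • μ.restrict C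
        + ENNReal.ofReal 1 • μ.restrict (A ∪ B ∪ C)ᶜ) (Set.Icc a b)ᶜ = 0
      ∧ (∫ x, x ∂(ENNReal.ofReal (1 + d₁) • μ.restrict A
        + ENNReal.ofReal (1 + d₂) • μ.restrict B + ENNReal.ofReal (1 + d₃) • μ.restrict C
        + ENNReal.ofReal 1 • μ.restrict (A ∪ B ∪ C)ᶜ)) = ∫ x, x ∂μ := by
  obtain ⟨h₁l, h₁r⟩ := abs_le.mp h₁
  obtain ⟨h₂l, h₂r⟩ := abs_le.mp h₂
  obtain ⟨h₃l, h₃r⟩ := abs_le.mp h₃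
  set D := (A ∪ B ∪ C)ᶜ with hD
  have hDm : MeasurableSet D := ((hA.union hB).union hC).compl
  set ν := ENNReal.ofReal (1 + d₁) • μ.restrict A
        + ENNReal.ofReal (1 + d₂) • μ.restrict B + ENNReal.ofReal (1 + d₃) • μ.restrict C
        + ENNReal.ofReal 1 • μ.restrict D with hν
  have hdecomp := ouq_decomp μ A B C hA hB hC hAB hAC hBC
  rw [← hD] at hdecomp
  have hsum : μ A + μ B + μ C + μ D = 1 := by
    have h := congrArg (fun ρ : Measure ℝ => ρ Set.univ) hdecomp
    simp only [Measure.add_apply, Measure.restrict_apply_univ] at h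
    rw [h, measure_univ]
  have hfinA := measure_ne_top μ A
  have hfinB := measure_ne_top μ B
  have hfinC := measure_ne_top μ C
  have hfinD := measure_ne_top μ D
  have hpsum : (μ A).toReal + (μ B).toReal + (μ C).toReal + (μ D).toReal = 1 := by
    have : ((μ A + μ B + μ C + μ D)).toReal = (1 : ENNReal).toReal := by rw [hsum]
    rw [ENNReal.toReal_add (by finiteness) hfinD, ENNReal.toReal_add (by finiteness) hfinC,
      ENNReal.toReal_add hfinA hfinB] at this
    simpa using this
  -- probability
  have hνuniv : ν Set.univ = 1 := by
    have happly : ν Set.univ = ENNReal.ofReal (1 + d₁) * μ A + ENNReal.ofReal (1 + d₂) * μ B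
        + ENNReal.ofReal (1 + d₃) * μ C + ENNReal.ofReal 1 * μ D := by
      simp [hν, Measure.add_apply, Measure.smul_apply, smul_eq_mul]
    have hfin : ν Set.univ ≠ ⊤ := by
      rw [happly]; finiteness
    have htr : (ν Set.univ).toReal = 1 := by
      rw [happly, ENNReal.toReal_add (by finiteness) (by finiteness),
        ENNReal.toReal_add (by finiteness) (by finiteness),
        ENNReal.toReal_add (by finiteness) (by finiteness),
        ENNReal.toReal_mul, ENNReal.toReal_mul, ENNReal.toReal_mul, ENNReal.toReal_mul,
        ENNReal.toReal_ofReal (by linarith), ENNReal.toReal_ofReal (by linarith),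
        ENNReal.toReal_ofReal (by linarith), ENNReal.toReal_ofReal (by norm_num)]
      linarith [hpsum, hp]
    rw [← ENNReal.ofReal_toReal hfin, htr, ENNReal.ofReal_one]
  refine ⟨⟨hνuniv⟩, ?_, ?_⟩
  · have hres : ∀ S : Set ℝ, μ.restrict S (Set.Icc a b)ᶜ = 0 := fun S => by
      rw [Measure.restrict_apply measurableSet_Icc.compl]
      exact measure_mono_null Set.inter_subset_left hsupp
    simp [hν, Measure.add_apply, Measure.smul_apply, hres]
  · have hIA : Integrable (fun u : ℝ => u) (μ.restrict A) := hInt.restrict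
    have hIB : Integrable (fun u : ℝ => u) (μ.restrict B) := hInt.restrict
    have hIC : Integrable (fun u : ℝ => u) (μ.restrict C) := hInt.restrict
    have hID : Integrable (fun u : ℝ => u) (μ.restrict D) := hInt.restrict
    have hsA := hIA.smul_measure (c := ENNReal.ofReal (1 + d₁)) ENNReal.ofReal_ne_top
    have hsB := hIB.smul_measure (c := ENNReal.ofReal (1 + d₂)) ENNReal.ofReal_ne_top
    have hsC := hIC.smul_measure (c := ENNReal.ofReal (1 + d₃)) ENNReal.ofReal_ne_top
    have hsD := hID.smul_measure (c := ENNReal.ofReal 1) ENNReal.ofReal_ne_top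
    have hνint : (∫ x, x ∂ν) = (1 + d₁) * (∫ u in A, u ∂μ) + (1 + d₂) * (∫ u in B, u ∂μ)
        + (1 + d₃) * (∫ u in C, u ∂μ) + (∫ u in D, u ∂μ) := by
      rw [hν, integral_add_measure ((hsA.add_measure hsB).add_measure hsC) hsD,
        integral_add_measure (hsA.add_measure hsB) hsC, integral_add_measure hsA hsB,
        integral_smul_measure, integral_smul_measure, integral_smul_measure,
        integral_smul_measure, ENNReal.toReal_ofReal (by linarith),
        ENNReal.toReal_ofReal (by linarith), ENNReal.toReal_ofReal (by linarith),
        ENNReal.toReal_ofReal (by norm_num)]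
      simp [smul_eq_mul]
    have hμint : (∫ x, x ∂μ) = (∫ u in A, u ∂μ) + (∫ u in B, u ∂μ)
        + (∫ u in C, u ∂μ) + (∫ u in D, u ∂μ) := by
      conv_lhs => rw [← hdecomp]
      rw [integral_add_measure ((hIA.add_measure hIB).add_measure hIC) hID,
        integral_add_measure (hIA.add_measure hIB) hIC, integral_add_measure hIA hIB]
    rw [hνint, hμint]; linarith

set_option maxHeartbeats 1000000 in
private lemma ouq_three_points (a b m : ℝ)
    (μ : Measure ℝ) (hprob : IsProbabilityMeasure μ)
    (hsupp : μ (Set.Icc a b)ᶜ = 0) (hmean : (∫ x, x ∂μ) = m)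
    (x y z : ℝ) (hxy : x < y) (hyz : y < z)
    (hx : μ (Metric.ball x (min (y - x) (z - y) / 3)) ≠ 0)
    (hy : μ (Metric.ball y (min (y - x) (z - y) / 3)) ≠ 0)
    (hz : μ (Metric.ball z (min (y - x) (z - y) / 3)) ≠ 0)
    (hext : ∀ μ₁, (IsProbabilityMeasure μ₁ ∧ μ₁ (Set.Icc a b)ᶜ = 0 ∧ (∫ x, x ∂μ₁) = m) →
      ∀ μ₂, (IsProbabilityMeasure μ₂ ∧ μ₂ (Set.Icc a b)ᶜ = 0 ∧ (∫ x, x ∂μ₂) = m) →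
      ∀ w : ℝ, 0 < w → w < 1 →
      μ = ENNReal.ofReal w • μ₁ + ENNReal.ofReal (1 - w) • μ₂ → μ₁ = μ₂) : False := by
  set r : ℝ := min (y - x) (z - y) / 3 with hrdef
  have hr : 0 < r := by
    have := lt_min (by linarith : (0:ℝ) < y - x) (by linarith : (0:ℝ) < z - y)
    positivity
  have hr1 : 3 * r ≤ y - x := by
    have := min_le_left (y - x) (z - y); rw [hrdef]; linarith
  have hr2 : 3 * r ≤ z - y := by
    have := min_le_right (y - x) (z - y); rw [hrdef]; linarith
  set A := Metric.ball x r with hAdef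
  set B := Metric.ball y r with hBdef
  set C := Metric.ball z r with hCdef
  have hmemA : ∀ u ∈ A, |u - x| < r := fun u hu => by
    simpa [hAdef, Real.dist_eq] using hu
  have hmemB : ∀ u ∈ B, |u - y| < r := fun u hu => by
    simpa [hBdef, Real.dist_eq] using hu
  have hmemC : ∀ u ∈ C, |u - z| < r := fun u hu => by
    simpa [hCdef, Real.dist_eq] using hu
  have hAB : Disjoint A B := Set.disjoint_left.mpr fun u huA huB => by
    have h1 := abs_lt.mp (hmemA u huA); have h2 := abs_lt.mp (hmemB u huB); linarith
  have hAC : Disjoint A C := Set.disjoint_left.mpr fun u huA huC => by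
    have h1 := abs_lt.mp (hmemA u huA); have h2 := abs_lt.mp (hmemC u huC); linarith
  have hBC : Disjoint B C := Set.disjoint_left.mpr fun u huB huC => by
    have h1 := abs_lt.mp (hmemB u huB); have h2 := abs_lt.mp (hmemC u huC); linarith
  set p₁ := (μ A).toReal with hp₁def
  set p₂ := (μ B).toReal with hp₂def
  set p₃ := (μ C).toReal with hp₃def
  have hp₁ : 0 < p₁ := ENNReal.toReal_pos hx (measure_ne_top μ A)
  have hp₂ : 0 < p₂ := ENNReal.toReal_pos hy (measure_ne_top μ B)
  have hp₃ : 0 < p₃ := ENNReal.toReal_pos hz (measure_ne_top μ C)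
  set q₁ := ∫ u in A, u ∂μ with hq₁def
  set q₂ := ∫ u in B, u ∂μ with hq₂def
  set q₃ := ∫ u in C, u ∂μ with hq₃def
  -- integrability of the identity
  have hbound : ∀ᵐ u ∂μ, u ∈ Set.Icc a b := by
    rw [MeasureTheory.ae_iff]
    exact hsupp
  have hInt : Integrable (fun u : ℝ => u) μ := by
    refine Integrable.mono' (integrable_const (max |a| |b|))
      measurable_id.aestronglyMeasurable ?_
    filter_upwards [hbound] with u hu
    rw [Real.norm_eq_abs, abs_le]
    constructor
    · have h1 : -|a| ≤ a := neg_abs_le a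
      have h2 : |a| ≤ max |a| |b| := le_max_left _ _
      linarith [hu.1]
    · have h1 : b ≤ |b| := le_abs_self b
      have h2 : |b| ≤ max |a| |b| := le_max_right _ _
      linarith [hu.2]
  -- bounds on the partial means
  have hball_bound : ∀ c : ℝ,
      (∫ u in Metric.ball c r, u ∂μ) ≤ (c + r) * (μ (Metric.ball c r)).toReal ∧
      (c - r) * (μ (Metric.ball c r)).toReal ≤ (∫ u in Metric.ball c r, u ∂μ) := by
    intro c
    constructor
    · calc (∫ u in Metric.ball c r, u ∂μ) ≤ ∫ _ in Metric.ball c r, (c + r) ∂μ := by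
            refine setIntegral_mono_on hInt.restrict
              (integrableOn_const measure_ball_lt_top.ne)
              measurableSet_ball fun u hu => ?_
            have := abs_lt.mp (by simpa [Real.dist_eq] using hu : |u - c| < r)
            linarith
        _ = (c + r) * (μ (Metric.ball c r)).toReal := by
            rw [setIntegral_const, smul_eq_mul, measureReal_def]; ring
    · calc (c - r) * (μ (Metric.ball c r)).toReal = ∫ _ in Metric.ball c r, (c - r) ∂μ := by
            rw [setIntegral_const, smul_eq_mul, measureReal_def]; ring
        _ ≤ ∫ u in Metric.ball c r, u ∂μ := by
            refine setIntegral_mono_on (integrableOn_const measure_ball_lt_top.ne)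
              hInt.restrict measurableSet_ball fun u hu => ?_
            have := abs_lt.mp (by simpa [Real.dist_eq] using hu : |u - c| < r)
            linarith
  have hA1 := hball_bound x
  have hB1 := hball_bound y
  -- the perturbation direction
  set e₁ := p₂ * q₃ - p₃ * q₂ with he₁
  set e₂ := p₃ * q₁ - p₁ * q₃ with he₂
  set e₃ := p₁ * q₂ - p₂ * q₁ with he₃
  have he₃pos : 0 < e₃ := by
    have h1 : q₁ ≤ (x + r) * p₁ := hA1.1
    have h2 : (y - r) * p₂ ≤ q₂ := hB1.2
    have hxr : x + r < y - r := by linarith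
    have k1 : p₂ * q₁ ≤ (x + r) * (p₁ * p₂) := by
      calc p₂ * q₁ ≤ p₂ * ((x + r) * p₁) := mul_le_mul_of_nonneg_left h1 hp₂.le
        _ = (x + r) * (p₁ * p₂) := by ring
    have k2 : (y - r) * (p₁ * p₂) ≤ p₁ * q₂ := by
      calc (y - r) * (p₁ * p₂) = p₁ * ((y - r) * p₂) := by ring
        _ ≤ p₁ * q₂ := mul_le_mul_of_nonneg_left h2 hp₁.le
    have k3 : (x + r) * (p₁ * p₂) < (y - r) * (p₁ * p₂) :=
      mul_lt_mul_of_pos_right hxr (mul_pos hp₁ hp₂)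
    rw [he₃]
    linarith
  have hep : e₁ * p₁ + e₂ * p₂ + e₃ * p₃ = 0 := by rw [he₁, he₂, he₃]; ring
  have heq : e₁ * q₁ + e₂ * q₂ + e₃ * q₃ = 0 := by rw [he₁, he₂, he₃]; ring
  set t : ℝ := (2 * (1 + |e₁| + |e₂| + |e₃|))⁻¹ with htdef
  have hden : 0 < 2 * (1 + |e₁| + |e₂| + |e₃|) := by positivity
  have ht : 0 < t := by positivity
  have htb : ∀ e : ℝ, |e| ≤ |e₁| + |e₂| + |e₃| → |t * e| ≤ 1 / 2 := by
    intro e he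
    rw [abs_mul, abs_of_pos ht, htdef, inv_mul_le_iff₀ hden]
    have : |e| ≤ 1 + |e₁| + |e₂| + |e₃| := by linarith
    linarith
  have ht₁ : |t * e₁| ≤ 1 / 2 := htb e₁ (by linarith [abs_nonneg e₂, abs_nonneg e₃])
  have ht₂ : |t * e₂| ≤ 1 / 2 := htb e₂ (by linarith [abs_nonneg e₁, abs_nonneg e₃])
  have ht₃ : |t * e₃| ≤ 1 / 2 := htb e₃ (by linarith [abs_nonneg e₁, abs_nonneg e₂])
  have htn₁ : |-(t * e₁)| ≤ 1 / 2 := by rwa [abs_neg]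
  have htn₂ : |-(t * e₂)| ≤ 1 / 2 := by rwa [abs_neg]
  have htn₃ : |-(t * e₃)| ≤ 1 / 2 := by rwa [abs_neg]
  -- the two perturbed measures
  have hmem₁ := ouq_pert_mem a b μ hsupp A B C measurableSet_ball measurableSet_ball
    measurableSet_ball hAB hAC hBC hInt (t * e₁) (t * e₂) (t * e₃) ht₁ ht₂ ht₃
    (by rw [← hp₁def, ← hp₂def, ← hp₃def]; linear_combination t * hep)
    (by rw [← hq₁def, ← hq₂def, ← hq₃def]; linear_combination t * heq)
  have hmem₂ := ouq_pert_mem a b μ hsupp A B C measurableSet_ball measurableSet_ball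
    measurableSet_ball hAB hAC hBC hInt (-(t * e₁)) (-(t * e₂)) (-(t * e₃)) htn₁ htn₂ htn₃
    (by rw [← hp₁def, ← hp₂def, ← hp₃def]; linear_combination (-t) * hep)
    (by rw [← hq₁def, ← hq₂def, ← hq₃def]; linear_combination (-t) * heq)
  set D := (A ∪ B ∪ C)ᶜ with hDdef
  set μ₁ := ENNReal.ofReal (1 + t * e₁) • μ.restrict A
      + ENNReal.ofReal (1 + t * e₂) • μ.restrict B + ENNReal.ofReal (1 + t * e₃) • μ.restrict C
      + ENNReal.ofReal 1 • μ.restrict D with hμ₁def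
  set μ₂ := ENNReal.ofReal (1 + -(t * e₁)) • μ.restrict A
      + ENNReal.ofReal (1 + -(t * e₂)) • μ.restrict B
      + ENNReal.ofReal (1 + -(t * e₃)) • μ.restrict C
      + ENNReal.ofReal 1 • μ.restrict D with hμ₂def
  -- μ is the half-half combination
  have habs₁ := abs_le.mp ht₁
  have habs₂ := abs_le.mp ht₂
  have habs₃ := abs_le.mp ht₃
  have hhalf : (0:ℝ) ≤ 1 + -(1/2) := by norm_num
  have hc₁l : (0:ℝ) ≤ 1 + t * e₁ := le_trans hhalf (add_le_add_right habs₁.1 1)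
  have hc₁r : (0:ℝ) ≤ 1 + -(t * e₁) := le_trans hhalf (add_le_add_right (neg_le_neg habs₁.2) 1)
  have hc₂l : (0:ℝ) ≤ 1 + t * e₂ := le_trans hhalf (add_le_add_right habs₂.1 1)
  have hc₂r : (0:ℝ) ≤ 1 + -(t * e₂) := le_trans hhalf (add_le_add_right (neg_le_neg habs₂.2) 1)
  have hc₃l : (0:ℝ) ≤ 1 + t * e₃ := le_trans hhalf (add_le_add_right habs₃.1 1)
  have hc₃r : (0:ℝ) ≤ 1 + -(t * e₃) := le_trans hhalf (add_le_add_right (neg_le_neg habs₃.2) 1)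
  have hsplit : ENNReal.ofReal (1/2) • μ₁ + ENNReal.ofReal (1/2) • μ₂ = μ := by
    have hre : ENNReal.ofReal (1/2) • μ₁ + ENNReal.ofReal (1/2) • μ₂
        = (ENNReal.ofReal (1/2) • (ENNReal.ofReal (1 + t * e₁) • μ.restrict A)
            + ENNReal.ofReal (1/2) • (ENNReal.ofReal (1 + -(t * e₁)) • μ.restrict A))
          + (ENNReal.ofReal (1/2) • (ENNReal.ofReal (1 + t * e₂) • μ.restrict B)
            + ENNReal.ofReal (1/2) • (ENNReal.ofReal (1 + -(t * e₂)) • μ.restrict B))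
          + (ENNReal.ofReal (1/2) • (ENNReal.ofReal (1 + t * e₃) • μ.restrict C)
            + ENNReal.ofReal (1/2) • (ENNReal.ofReal (1 + -(t * e₃)) • μ.restrict C))
          + (ENNReal.ofReal (1/2) • (ENNReal.ofReal (1:ℝ) • μ.restrict D)
            + ENNReal.ofReal (1/2) • (ENNReal.ofReal (1:ℝ) • μ.restrict D)) := by
      rw [hμ₁def, hμ₂def]; simp only [smul_add]; abel
    rw [hre,
      ouq_half_smul (1 + t * e₁) (1 + -(t * e₁)) hc₁l hc₁r (by ring) (μ.restrict A),
      ouq_half_smul (1 + t * e₂) (1 + -(t * e₂)) hc₂l hc₂r (by ring) (μ.restrict B),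
      ouq_half_smul (1 + t * e₃) (1 + -(t * e₃)) hc₃l hc₃r (by ring) (μ.restrict C),
      ouq_half_smul 1 1 zero_le_one zero_le_one (by norm_num), hDdef]
    exact ouq_decomp μ A B C measurableSet_ball measurableSet_ball measurableSet_ball hAB hAC hBC
  have h12 : (1 : ℝ) - 1/2 = 1/2 := by norm_num
  have heqm : μ₁ = μ₂ := by
    refine hext μ₁ ?_ μ₂ ?_ (1/2) (by norm_num) (by norm_num) ?_
    · exact ⟨hmem₁.1, hmem₁.2.1, by rw [hmem₁.2.2, hmean]⟩
    · exact ⟨hmem₂.1, hmem₂.2.1, by rw [hmem₂.2.2, hmean]⟩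
    · rw [h12, hsplit]
  -- contradiction: evaluate at C
  have hCA : C ∩ A = ∅ := by
    rw [Set.eq_empty_iff_forall_notMem]; rintro u ⟨h1, h2⟩
    exact Set.disjoint_left.mp hAC h2 h1
  have hCB : C ∩ B = ∅ := by
    rw [Set.eq_empty_iff_forall_notMem]; rintro u ⟨h1, h2⟩
    exact Set.disjoint_left.mp hBC h2 h1
  have hCD : C ∩ D = ∅ := by
    rw [Set.eq_empty_iff_forall_notMem]; rintro u ⟨h1, h2⟩
    exact h2 (Or.inr h1)
  have happC : ∀ c₁ c₂ c₃ : ℝ≥0∞,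
      (c₁ • μ.restrict A + c₂ • μ.restrict B + c₃ • μ.restrict C
        + ENNReal.ofReal 1 • μ.restrict D) C = c₃ * μ C := by
    intro c₁ c₂ c₃
    rw [Measure.add_apply, Measure.add_apply, Measure.add_apply, Measure.smul_apply,
      Measure.smul_apply, Measure.smul_apply, Measure.smul_apply,
      Measure.restrict_apply measurableSet_ball, Measure.restrict_apply measurableSet_ball,
      Measure.restrict_apply measurableSet_ball, Measure.restrict_apply measurableSet_ball,
      hCA, hCB, hCD, Set.inter_self]
    simp [smul_eq_mul, hCdef]
  have hval : ENNReal.ofReal (1 + t * e₃) * μ C = ENNReal.ofReal (1 + -(t * e₃)) * μ C := by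
    have h1 := happC (ENNReal.ofReal (1 + t * e₁)) (ENNReal.ofReal (1 + t * e₂))
      (ENNReal.ofReal (1 + t * e₃))
    have h2 := happC (ENNReal.ofReal (1 + -(t * e₁))) (ENNReal.ofReal (1 + -(t * e₂)))
      (ENNReal.ofReal (1 + -(t * e₃)))
    rw [← hμ₁def] at h1
    rw [← hμ₂def] at h2
    rw [← h1, ← h2, heqm]
  have hts₁ : (ENNReal.ofReal (1 + t * e₃)).toReal = 1 + t * e₃ :=
    ENNReal.toReal_ofReal hc₃l
  have hts₂ : (ENNReal.ofReal (1 + -(t * e₃))).toReal = 1 + -(t * e₃) :=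
    ENNReal.toReal_ofReal hc₃r
  have hvalr : (1 + t * e₃) * p₃ = (1 + -(t * e₃)) * p₃ := by
    have := congrArg ENNReal.toReal hval
    rwa [ENNReal.toReal_mul, ENNReal.toReal_mul, hts₁, hts₂, ← hp₃def] at this
  have hfin : t * e₃ * p₃ = 0 := by linear_combination hvalr / 2
  exact (mul_pos (mul_pos ht he₃pos) hp₃).ne' hfin

private lemma ouq_support_null (μ : Measure ℝ) :
    μ {u : ℝ | ∀ s > 0, μ (Metric.ball u s) ≠ 0}ᶜ = 0 := by
  set S := {u : ℝ | ∀ s > 0, μ (Metric.ball u s) ≠ 0} with hS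
  have hex : ∀ u : (Sᶜ : Set ℝ), ∃ s > 0, μ (Metric.ball (u : ℝ) s) = 0 := by
    rintro ⟨u, hu⟩
    have : ¬ ∀ s > 0, μ (Metric.ball u s) ≠ 0 := hu
    push_neg at this
    obtain ⟨s, hs, h0⟩ := this
    exact ⟨s, hs, h0⟩
  choose rad hrad hnull using hex
  obtain ⟨T, hTc, hTu⟩ := TopologicalSpace.isOpen_iUnion_countable
    (fun u : (Sᶜ : Set ℝ) => Metric.ball (u : ℝ) (rad u)) (fun u => Metric.isOpen_ball)
  have hcover : Sᶜ ⊆ ⋃ u ∈ T, Metric.ball (u : ℝ) (rad u) := by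
    rw [hTu]
    intro u hu
    exact Set.mem_iUnion.mpr ⟨⟨u, hu⟩, Metric.mem_ball_self (hrad ⟨u, hu⟩)⟩
  exact measure_mono_null hcover
    ((measure_biUnion_null_iff hTc).mpr fun u _ => hnull u)

/-- OUQ reduction theorem (simplest case): every extreme point of the convex
set of Borel probability measures on `[a, b]` with mean `m` is supported on at
most 2 points. -/
theorem ouq_reduction_two_points
    (a b m : ℝ) (hab : a ≤ b) (hm : m ∈ Set.Icc a b)
    (M : Set (Measure ℝ))
    (hM : M = {μ : Measure ℝ | IsProbabilityMeasure μ ∧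
        μ (Set.Icc a b)ᶜ = 0 ∧ (∫ x, x ∂μ) = m})
    (μ : Measure ℝ) (hμ : μ ∈ M)
    (hext : ∀ μ₁ ∈ M, ∀ μ₂ ∈ M, ∀ w : ℝ, 0 < w → w < 1 →
      μ = ENNReal.ofReal w • μ₁ + ENNReal.ofReal (1 - w) • μ₂ → μ₁ = μ₂) :
    ∃ s : Finset ℝ, s.card ≤ 2 ∧ μ (↑s : Set ℝ)ᶜ = 0 := by
  subst hM
  obtain ⟨hprob, hsupp, hmean⟩ := hμ
  set S := {u : ℝ | ∀ s > 0, μ (Metric.ball u s) ≠ 0} with hS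
  have hSnull : μ Sᶜ = 0 := ouq_support_null μ
  by_cases h2 : ∃ u v : ℝ, S ⊆ {u, v}
  · obtain ⟨u, v, huv⟩ := h2
    refine ⟨{u, v}, ?_, ?_⟩
    · exact (Finset.card_insert_le _ _).trans (by simp)
    · refine measure_mono_null ?_ hSnull
      intro w hw
      simp only [Set.mem_compl_iff, Finset.coe_insert, Finset.coe_singleton] at hw
      exact fun hwS => hw (huv hwS)
  · push_neg at h2
    exfalso
    have hball : ∀ u ∈ S, ∀ s : ℝ, 0 < s → μ (Metric.ball u s) ≠ 0 := fun u hu s hs => hu s hs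
    obtain ⟨u₀, hu₀S, _⟩ := Set.not_subset.mp (h2 0 0)
    obtain ⟨u₁, hu₁S, hu₁⟩ := Set.not_subset.mp (h2 u₀ u₀)
    obtain ⟨u₂, hu₂S, hu₂⟩ := Set.not_subset.mp (h2 u₀ u₁)
    have hne01 : u₁ ≠ u₀ := by simpa using hu₁
    have hne02 : u₂ ≠ u₀ := fun h => hu₂ (by simp [h])
    have hne12 : u₂ ≠ u₁ := fun h => hu₂ (by simp [h])
    have hext' : ∀ μ₁, (IsProbabilityMeasure μ₁ ∧ μ₁ (Set.Icc a b)ᶜ = 0 ∧ (∫ x, x ∂μ₁) = m) →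
        ∀ μ₂, (IsProbabilityMeasure μ₂ ∧ μ₂ (Set.Icc a b)ᶜ = 0 ∧ (∫ x, x ∂μ₂) = m) →
        ∀ w : ℝ, 0 < w → w < 1 →
        μ = ENNReal.ofReal w • μ₁ + ENNReal.ofReal (1 - w) • μ₂ → μ₁ = μ₂ :=
      fun μ₁ h₁ μ₂ h₂ => hext μ₁ h₁ μ₂ h₂
    have key : ∀ x y z : ℝ, x ∈ S → y ∈ S → z ∈ S → x < y → y < z → False := by
      intro x y z hxS hyS hzS hxy hyz
      have hr : 0 < min (y - x) (z - y) / 3 :=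
        div_pos (lt_min (sub_pos.mpr hxy) (sub_pos.mpr hyz)) (by norm_num)
      exact ouq_three_points a b m μ hprob hsupp hmean x y z hxy hyz
        (hxS _ hr) (hyS _ hr) (hzS _ hr) hext'
    rcases lt_trichotomy u₀ u₁ with h01 | h01 | h01
    · rcases lt_trichotomy u₁ u₂ with h12 | h12 | h12
      · exact key u₀ u₁ u₂ hu₀S hu₁S hu₂S h01 h12
      · exact hne12 h12.symm
      · rcases lt_trichotomy u₀ u₂ with h02 | h02 | h02
        · exact key u₀ u₂ u₁ hu₀S hu₂S hu₁S h02 h12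
        · exact hne02 h02.symm
        · exact key u₂ u₀ u₁ hu₂S hu₀S hu₁S h02 h01
    · exact hne01 h01.symm
    · rcases lt_trichotomy u₂ u₀ with h20 | h20 | h20
      · rcases lt_trichotomy u₂ u₁ with h21 | h21 | h21
        · exact key u₂ u₁ u₀ hu₂S hu₁S hu₀S h21 h01
        · exact hne12 h21
        · exact key u₁ u₂ u₀ hu₁S hu₂S hu₀S h21 h20
      · exact hne02 h20
      · exact key u₁ u₀ u₂ hu₁S hu₀S hu₂S h01 h20
end

section
/- The map δ ↦ z∗(δ) implicitly defined by the boundary system is strictly increasing: if (z₁, A₁) and (z₂, A₂) both solve the system with perturbations δ₁ < δ₂ respectively, A₁, A₂ > 0, z₁, z₂ ∈ [0, 1), and additionally A·tanh((A/(2v))(1−z)) = 1 pins down A as a function of z, then z₁ < z₂. -/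
/-! Write `F(A, s) = A tanh (A s / (2v))`, so the system reads `F(A, 1 - z) = 1`,
`F(A, 1 + z) = 1 + δ`. On the positive quadrant `F` is increasing in both arguments, strictly
in `A`. If `z₂ ≤ z₁`, then `1 - z₁ ≤ 1 - z₂` and the first equation forces `A₂ ≤ A₁`; but then
`1 + δ₂ = F(A₂, 1 + z₂) ≤ F(A₁, 1 + z₁) = 1 + δ₁`. -/

namespace Real

theorem tanh_strictMono : StrictMono tanh := fun x y hxy => by
  rwa [← artanh_lt_artanh_iff ⟨neg_one_lt_tanh x, tanh_lt_one x⟩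
    ⟨neg_one_lt_tanh y, tanh_lt_one y⟩, artanh_tanh, artanh_tanh]

theorem tanh_pos {x : ℝ} (hx : 0 < x) : 0 < tanh x := by
  simpa using tanh_strictMono hx

theorem tanh_nonneg {x : ℝ} (hx : 0 ≤ x) : 0 ≤ tanh x := by
  simpa using tanh_strictMono.monotone hx

theorem mul_tanh_div_mul_le_mul_tanh_div_mul {a b c s t : ℝ} (ha : 0 ≤ a) (hab : a ≤ b)
    (hc : 0 ≤ c) (hs : 0 ≤ s) (hst : s ≤ t) :
    a * tanh (a / c * s) ≤ b * tanh (b / c * t) := by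
  refine mul_le_mul hab (tanh_strictMono.monotone ?_) (tanh_nonneg (by positivity))
    (ha.trans hab)
  exact mul_le_mul (div_le_div_of_nonneg_right hab hc) hst hs (div_nonneg (ha.trans hab) hc)

theorem mul_tanh_div_mul_lt_mul_tanh_div_mul {a b c s t : ℝ} (ha : 0 < a) (hab : a < b)
    (hc : 0 < c) (hs : 0 < s) (hst : s ≤ t) :
    a * tanh (a / c * s) < b * tanh (b / c * t) := by
  refine mul_lt_mul hab (tanh_strictMono.monotone ?_) (tanh_pos (by positivity))
    (ha.trans hab).le
  exact mul_le_mul (div_le_div_of_nonneg_right hab.le hc.le) hst hs.le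
    (div_nonneg (ha.trans hab).le hc.le)

end Real

/-- The transition-layer location is strictly increasing in the perturbation:
if `(z₁, A₁)` and `(z₂, A₂)` solve the boundary system with `δ₁ < δ₂`,
`A₁, A₂ > 0`, `z₁, z₂ ∈ [0, 1)`, then `z₁ < z₂`. -/
theorem shock_location_strict_mono_in_delta
    (v δ₁ δ₂ z₁ z₂ A₁ A₂ : ℝ) (hv : 0 < v) (hδ : δ₁ < δ₂)
    (hA₁ : 0 < A₁) (hA₂ : 0 < A₂)
    (hz₁ : z₁ ∈ Set.Ico (0 : ℝ) 1) (hz₂ : z₂ ∈ Set.Ico (0 : ℝ) 1)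
    (h11 : A₁ * Real.tanh ((A₁ / (2 * v)) * (1 - z₁)) = 1)
    (h12 : A₁ * Real.tanh ((A₁ / (2 * v)) * (1 + z₁)) = 1 + δ₁)
    (h21 : A₂ * Real.tanh ((A₂ / (2 * v)) * (1 - z₂)) = 1)
    (h22 : A₂ * Real.tanh ((A₂ / (2 * v)) * (1 + z₂)) = 1 + δ₂) :
    z₁ < z₂ := by
  by_contra! hz
  have hA : A₂ ≤ A₁ := le_of_not_gt fun hlt =>
    (Real.mul_tanh_div_mul_lt_mul_tanh_div_mul (c := 2 * v) hA₁ hlt (by positivity)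
      (sub_pos.2 hz₁.2) (by linarith)).ne (h11.trans h21.symm)
  have hδ_le := Real.mul_tanh_div_mul_le_mul_tanh_div_mul (c := 2 * v) hA₂.le hA (by positivity)
    (by linarith [hz₂.1]) (by linarith : 1 + z₂ ≤ 1 + z₁)
  linarith
end
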